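/- For A a flanked presheaf on Ξ, the unit η_A : A → u*i*A of the adjunction i* ⊣ u* — the map whose component in degree n is the composite s_{⊤+1} ∘ s_{⊥−1} : A_n → A_{n+2} of extra outer degeneracy maps — is a cartesian map of presheaves on Ξ. -/

import Mathlib

/-!
The component `η_n = s_{⊤+1} ∘ s_{⊥-1}` is split injective, and its image is the set of
elements of `A_{n+2}` that are both bottom- and top-degenerate. So the naturality square of `η`
at `f : ⟨m⟩ ⟶ ⟨n⟩` is a pullback as soon as `w` is bottom-degenerate whenever `A(i u f) w` is
(and dually for top). Flankedness says exactly this with `i u f` replaced by a top face;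
iterating, `w` is bottom-degenerate iff its restriction along the corner `⟨1⟩ ⟶ ⟨q+1⟩` onto
`{⊥, 1, ⊤}` is, and `i u f` fixes the element `1`, so it carries corners to corners.
-/

open CategoryTheory Opposite

namespace DS3

/-! ## The simplex category Δ: generic and free maps, decomposition spaces -/

/-- A morphism of the simplex category is *generic* (endpoint-preserving) if it preserves
the bottom and the top element. -/
def IsGeneric {m n : SimplexCategory} (a : m ⟶ n) : Prop :=
  a.toOrderHom 0 = 0 ∧ a.toOrderHom (Fin.last m.len) = Fin.last n.len

/-- A morphism of the simplex category is *free* (distance-preserving) if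
`a (i+1) = a i + 1`. -/
def IsFree {m n : SimplexCategory} (a : m ⟶ n) : Prop :=
  ∀ i : Fin m.len, (a.toOrderHom i.succ : ℕ) = (a.toOrderHom i.castSucc : ℕ) + 1

/-- A simplicial set is a *decomposition space* if it sends every pushout in `Δ` of a
generic map along a free map to a pullback of sets. -/
def IsDecomposition (X : SimplexCategoryᵒᵖ ⥤ Type) : Prop :=
  ∀ {a b c d : SimplexCategory} (g : a ⟶ b) (f : a ⟶ c) (f' : b ⟶ d) (g' : c ⟶ d),
    IsGeneric g → IsFree f → IsPushout g f f' g' →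
    IsPullback (X.map f'.op) (X.map g'.op) (X.map g.op) (X.map f.op)

/-- A simplicial map is *cULF* if its naturality squares at all generic maps are
pullbacks. -/
def IsCULF {Y X : SimplexCategoryᵒᵖ ⥤ Type} (α : Y ⟶ X) : Prop :=
  ∀ {m n : SimplexCategory} (g : m ⟶ n), IsGeneric g →
    IsPullback (α.app (op n)) (Y.map g.op) (X.map g.op) (α.app (op m))

/-! ## The category Ξ of finite strict intervals -/

/-- Objects of the category `Ξ` of finite strict intervals: `⟨t⟩` stands for the finite
linear order `Fin (t+2)` with (distinct) bottom element `0` and top element `t+1`.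
In the indexing of the paper, `⟨t⟩` is the object `[t-1]`; thus `⟨0⟩ = [-1]`. -/
@[ext] structure IntervalCat : Type where
  /-- the number of non-endpoint elements -/
  len : ℕ

namespace IntervalCat

/-- Morphisms of `Ξ`: order-preserving maps preserving the bottom and the top element. -/
@[ext] structure Hom (a b : IntervalCat) : Type where
  toOrderHom : Fin (a.len + 2) →o Fin (b.len + 2)
  map_bot : toOrderHom 0 = 0
  map_top : toOrderHom (Fin.last (a.len + 1)) = Fin.last (b.len + 1)

instance : Category IntervalCat where
  Hom := Hom
  id a := ⟨OrderHom.id, rfl, rfl⟩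
  comp f g := ⟨g.toOrderHom.comp f.toOrderHom,
    by simp [f.map_bot, g.map_bot], by simp [f.map_top, g.map_top]⟩
  id_comp f := Hom.ext rfl
  comp_id f := Hom.ext rfl
  assoc f g h := Hom.ext rfl

end IntervalCat

/-- The coface map `⟨t⟩ ⟶ ⟨t+1⟩` of `Ξ` skipping the non-endpoint element `i+1`
(for `i ≤ t`; out of this range the index is clamped).  Under a presheaf `A` on `Ξ` it
induces the face map `d_i : A_n → A_{n-1}` (paper indexing `n = t-1`); for `t = i = 0` it is
the extra outer coface `[-1] → [0]`, inducing `A_0 → A_{-1}`. -/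
def xiFace (t i : ℕ) : IntervalCat.mk t ⟶ IntervalCat.mk (t + 1) where
  toOrderHom :=
    { toFun := fun x =>
        ⟨if (x : ℕ) < min (i + 1) (t + 1) then (x : ℕ) else (x : ℕ) + 1, by
          have := x.isLt
          dsimp only at this ⊢
          split <;> omega⟩
      monotone' := by
        intro x y hxy
        have hxy' : (x : ℕ) ≤ (y : ℕ) := hxy
        simp only [Fin.mk_le_mk]
        split <;> split <;> omega }
  map_bot := by
    apply Fin.ext
    simp only [OrderHom.coe_mk, Fin.val_zero]
    simp
  map_top := by
    apply Fin.ext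
    simp only [OrderHom.coe_mk, Fin.val_last]
    split <;> omega

/-- The codegeneracy map `⟨t+1⟩ ⟶ ⟨t⟩` of `Ξ` collapsing the pair `(j, j+1)` onto `j`
(for `j ≤ t+1`; out of this range the index is clamped).  For `j = 0` this is the extra
bottom codegeneracy (inducing `s_{⊥-1} : A_n → A_{n+1}`, paper indexing `n = t-1`), for
`j = t+1` the extra top codegeneracy (inducing `s_{⊤+1}`), and for `1 ≤ j ≤ t` the ordinary
codegeneracy `σ_{j-1}` (inducing `s_{j-1}`). -/
def xiSigma (t j : ℕ) : IntervalCat.mk (t + 1) ⟶ IntervalCat.mk t where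
  toOrderHom :=
    { toFun := fun x =>
        ⟨if (x : ℕ) ≤ min j (t + 1) then (x : ℕ) else (x : ℕ) - 1, by
          have := x.isLt
          dsimp only at this ⊢
          split <;> omega⟩
      monotone' := by
        intro x y hxy
        have hxy' : (x : ℕ) ≤ (y : ℕ) := hxy
        simp only [Fin.mk_le_mk]
        split <;> split <;> omega }
  map_bot := by
    apply Fin.ext
    simp only [OrderHom.coe_mk, Fin.val_zero]
    simp
  map_top := by
    apply Fin.ext
    simp only [OrderHom.coe_mk, Fin.val_last]
    split <;> omega

/-! ## The functors `u : Ξ ⥤ Δ` and `i : Δ ⥤ Ξ` -/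

/-- The forgetful functor `u : Ξ ⥤ Δ`, forgetting that the endpoints are distinguished:
`u ⟨t⟩ = [t+1]`. -/
def uF : IntervalCat ⥤ SimplexCategory where
  obj a := SimplexCategory.mk (a.len + 1)
  map f := SimplexCategory.mkHom f.toOrderHom
  map_id _ := rfl
  map_comp _ _ := rfl

/-- The underlying map of `i f`: extend `f` by a new bottom and a new top element. -/
def iObjMap {m n : ℕ} (f : Fin (m + 1) →o Fin (n + 1)) : Fin (m + 3) →o Fin (n + 3) where
  toFun x :=
    if (x : ℕ) = 0 then 0
    else if h : m + 2 ≤ (x : ℕ) then Fin.last (n + 2)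
    else ⟨(f ⟨(x : ℕ) - 1, by omega⟩ : ℕ) + 1, by
      have := (f ⟨(x : ℕ) - 1, by omega⟩).isLt; omega⟩
  monotone' := by
    intro x y hxy
    have hxy' : (x : ℕ) ≤ (y : ℕ) := hxy
    dsimp only
    by_cases h1 : (x : ℕ) = 0
    · simp only [if_pos h1]
      exact Fin.zero_le _
    · rw [if_neg h1]
      have hy1 : ¬ (y : ℕ) = 0 := by omega
      rw [if_neg hy1]
      by_cases h2 : m + 2 ≤ (x : ℕ)
      · rw [dif_pos h2, dif_pos (by omega : m + 2 ≤ (y : ℕ))]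
      · rw [dif_neg h2]
        by_cases h3 : m + 2 ≤ (y : ℕ)
        · rw [dif_pos h3]
          exact Fin.le_last _
        · rw [dif_neg h3]
          simp only [Fin.mk_le_mk]
          have : (⟨(x : ℕ) - 1, by omega⟩ : Fin (m + 1)) ≤ ⟨(y : ℕ) - 1, by omega⟩ := by
            simp only [Fin.mk_le_mk]; omega
          exact Nat.add_le_add_right (f.monotone this) 1

theorem iObjMap_bot {m n : ℕ} (f : Fin (m + 1) →o Fin (n + 1)) : iObjMap f 0 = 0 := by
  simp [iObjMap]

theorem iObjMap_top {m n : ℕ} (f : Fin (m + 1) →o Fin (n + 1)) :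
    iObjMap f (Fin.last (m + 2)) = Fin.last (n + 2) := by
  simp [iObjMap]

theorem iObjMap_id (m : ℕ) :
    iObjMap (OrderHom.id : Fin (m + 1) →o Fin (m + 1)) = OrderHom.id := by
  apply OrderHom.ext
  funext j
  apply Fin.ext
  have hj := j.isLt
  simp only [iObjMap, OrderHom.coe_mk, OrderHom.id_coe, id_eq]
  split_ifs with h1 h2 <;> simp <;> omega

theorem iObjMap_comp {m p n : ℕ} (f : Fin (m + 1) →o Fin (p + 1))
    (g : Fin (p + 1) →o Fin (n + 1)) :
    iObjMap (g.comp f) = (iObjMap g).comp (iObjMap f) := by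
  apply OrderHom.ext
  funext j
  apply Fin.ext
  have hj := j.isLt
  have e : ∀ {a b : ℕ} (h : Fin (a + 1) →o Fin (b + 1)) (x : Fin (a + 3)), iObjMap h x =
      if (x : ℕ) = 0 then 0 else if h' : a + 2 ≤ (x : ℕ) then Fin.last (b + 2)
      else ⟨(h ⟨(x : ℕ) - 1, by omega⟩ : ℕ) + 1, by
        have := (h ⟨(x : ℕ) - 1, by omega⟩).isLt; omega⟩ := fun _ _ => rfl
  simp only [e, OrderHom.comp_coe, Function.comp_apply]
  by_cases h1 : (j : ℕ) = 0
  · simp [h1]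
  · by_cases h2 : m + 2 ≤ (j : ℕ)
    · simp only [if_neg h1, dif_pos h2]
      rw [if_neg (by simp), dif_pos (by simp)]
    · simp only [if_neg h1, dif_neg h2]
      have hb := (f ⟨(j : ℕ) - 1, by omega⟩).isLt
      rw [if_neg (by simp), dif_neg (by simp; omega)]
      show _ = ((g ⟨(f ⟨(j : ℕ) - 1, by omega⟩ : ℕ) + 1 - 1, by omega⟩ : Fin (n + 1)) : ℕ) + 1
      congr 2

/-- The functor `i : Δ ⥤ Ξ` adjoining a new bottom and a new top element:
`i [n] = ⟨n+1⟩`. -/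
def iF : SimplexCategory ⥤ IntervalCat where
  obj x := ⟨x.len + 1⟩
  map f := ⟨iObjMap f.toOrderHom, iObjMap_bot _, iObjMap_top _⟩
  map_id x := IntervalCat.Hom.ext (iObjMap_id x.len)
  map_comp f g := IntervalCat.Hom.ext (iObjMap_comp f.toOrderHom g.toOrderHom)

/-! ## Presheaves on Ξ -/

/-- Restriction of a simplicial set along `u` (the functor `u*`). -/
def uStar (X : SimplexCategoryᵒᵖ ⥤ Type) : IntervalCatᵒᵖ ⥤ Type := uF.op ⋙ X

/-- Restriction of a presheaf on `Ξ` along `i` (the functor `i*`, taking underlying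
simplicial sets). -/
def iStar (A : IntervalCatᵒᵖ ⥤ Type) : SimplexCategoryᵒᵖ ⥤ Type := iF.op ⋙ A

/-- A map of presheaves on `Ξ` is *cartesian* if all its naturality squares are
pullbacks. -/
def IsCartesianXi {A B : IntervalCatᵒᵖ ⥤ Type} (α : A ⟶ B) : Prop :=
  ∀ ⦃c c' : IntervalCatᵒᵖ⦄ (φ : c ⟶ c'),
    IsPullback (α.app c) (A.map φ) (B.map φ) (α.app c')

/-- A presheaf `A` on `Ξ` is *flanked* if the extra outer degeneracy maps form cartesian
squares with the opposite outer face maps: for all `n ≥ 0` the squares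

`A_{n-1} ←d⊤− A_n`         `A_{n-1} ←d⊥− A_n`
`  s⊥↓        ↓s⊥`   and   `  s⊤↓        ↓s⊤`
`A_n  ←d⊤−  A_{n+1}`       `A_n  ←d⊥−  A_{n+1}`

are pullbacks (where `A_n := A(⟨n+1⟩)` in paper degree indexing, `d⊤` is the top face map,
`d⊥` the bottom face map, and for `n = 0` both are the extra outer face map
`A_0 → A_{-1}`). -/
def Flanked (A : IntervalCatᵒᵖ ⥤ Type) : Prop :=
  ∀ n : ℕ,
    IsPullback (A.map (xiFace n n).op) (A.map (xiSigma (n + 1) 0).op)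
      (A.map (xiSigma n 0).op) (A.map (xiFace (n + 1) (n + 1)).op) ∧
    IsPullback (A.map (xiFace n 0).op) (A.map (xiSigma (n + 1) (n + 2)).op)
      (A.map (xiSigma n (n + 1)).op) (A.map (xiFace (n + 1) 0).op)

lemma xiSigma_val (t j : ℕ) (x : Fin (t + 3)) :
    ((xiSigma t j).toOrderHom x : ℕ)
      = if (x : ℕ) ≤ min j (t + 1) then (x : ℕ) else (x : ℕ) - 1 := rfl

lemma iObjMap_val {m n : ℕ} (f : Fin (m + 1) →o Fin (n + 1)) (x : Fin (m + 3)) :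
    (iObjMap f x : ℕ)
      = if (x : ℕ) = 0 then 0
        else if h : m + 2 ≤ (x : ℕ) then n + 2
        else (f ⟨(x : ℕ) - 1, by omega⟩ : ℕ) + 1 := by
  simp only [iObjMap, OrderHom.coe_mk]
  split_ifs <;> simp_all

theorem nu_natural {a b : IntervalCat} (f : a ⟶ b) :
    (xiSigma (a.len + 1) (a.len + 2) ≫ xiSigma a.len 0) ≫ f
      = iF.map (uF.map f) ≫ (xiSigma (b.len + 1) (b.len + 2) ≫ xiSigma b.len 0) := by
  apply IntervalCat.Hom.ext
  apply OrderHom.ext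
  funext x
  apply Fin.ext
  have hx : (x : ℕ) < a.len + 4 := x.isLt
  have hfb := f.map_bot
  have hft := f.map_top
  have hfl := fun z : Fin (a.len + 2) => (f.toOrderHom z).isLt
  show (f.toOrderHom ((xiSigma a.len 0).toOrderHom ((xiSigma (a.len + 1) (a.len + 2)).toOrderHom x)) : ℕ)
      = ((xiSigma b.len 0).toOrderHom ((xiSigma (b.len + 1) (b.len + 2)).toOrderHom
          (iObjMap f.toOrderHom x)) : ℕ)
  rw [xiSigma_val, xiSigma_val, iObjMap_val]
  by_cases h0 : (x : ℕ) = 0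
  · have harg : (xiSigma a.len 0).toOrderHom ((xiSigma (a.len + 1) (a.len + 2)).toOrderHom x)
        = 0 := by
      apply Fin.ext
      rw [xiSigma_val, xiSigma_val]
      simp only [Fin.val_zero]
      split_ifs <;> omega
    rw [harg, hfb]
    simp [h0]
  · by_cases htop : (x : ℕ) = a.len + 3
    · have harg : (xiSigma a.len 0).toOrderHom ((xiSigma (a.len + 1) (a.len + 2)).toOrderHom x)
          = Fin.last (a.len + 1) := by
        apply Fin.ext
        rw [xiSigma_val, xiSigma_val]
        simp only [Fin.val_last]
        split_ifs <;> omega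
      rw [harg, hft]
      rw [if_neg h0, dif_pos (by omega : a.len + 1 + 2 ≤ (x : ℕ))]
      simp only [Fin.val_last]
      split_ifs <;> omega
    · have harg : (xiSigma a.len 0).toOrderHom ((xiSigma (a.len + 1) (a.len + 2)).toOrderHom x)
          = ⟨(x : ℕ) - 1, by show (x : ℕ) - 1 < a.len + 2; omega⟩ := by
        apply Fin.ext
        rw [xiSigma_val, xiSigma_val]
        dsimp only
        split_ifs <;> omega
      rw [harg]
      rw [if_neg h0, dif_neg (by omega : ¬ a.len + 1 + 2 ≤ (x : ℕ))]
      simp only [show b.len + 1 + 1 = b.len + 2 from rfl, min_self, Nat.zero_min]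
      rw [if_pos (Nat.succ_le_succ (Fin.is_le _)), if_neg (by simp)]
      simp only [Nat.add_sub_cancel]

/-- The unit `η_A : A ⟶ u*i*A` of the adjunction `i* ⊣ u*`: its component in degree `n`
is the composite `s_{⊤+1} ∘ s_{⊥-1} : A_n → A_{n+2}` of the two extra outer degeneracy
maps. -/
def unitNT (A : IntervalCatᵒᵖ ⥤ Type) : A ⟶ uStar (iStar A) where
  app c := A.map (xiSigma c.unop.len 0).op ≫
    A.map (xiSigma (c.unop.len + 1) (c.unop.len + 2)).op
  naturality {c c'} φ := by
    have h := congrArg (fun f => A.map f.op) (nu_natural φ.unop)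
    simp only [op_comp, A.map_comp, Quiver.Hom.op_unop, Category.assoc] at h
    refine h.trans ?_
    erw [op_comp, op_comp, A.map_comp, A.map_comp]
    rfl

lemma _root_.CategoryTheory.Limits.Types.isPullback_of_injective.{u} {X₁ X₂ X₃ X₄ : Type u}
    {t : X₁ ⟶ X₂} {l : X₁ ⟶ X₃} {r : X₂ ⟶ X₄} {b : X₃ ⟶ X₄} (w : t ≫ r = l ≫ b)
    (ht : Function.Injective t) (hb : Function.Injective b)
    (h : ∀ x₂, r x₂ ∈ Set.range b → x₂ ∈ Set.range t) : IsPullback t l r b := by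
  refine (Limits.Types.isPullback_iff _ _ _ _).2 ⟨w, fun _ _ hxy => ht hxy.1, ?_⟩
  intro x₂ x₃ hx
  obtain ⟨x₁, rfl⟩ := h x₂ ⟨x₃, hx.symm⟩
  exact ⟨x₁, rfl, hb ((ConcreteCategory.congr_hom w x₁).symm.trans hx)⟩

namespace IntervalCat

lemma comp_toOrderHom_apply {a b c : IntervalCat} (f : a ⟶ b) (g : b ⟶ c)
    (x : Fin (a.len + 2)) : (f ≫ g).toOrderHom x = g.toOrderHom (f.toOrderHom x) := rfl

lemma id_toOrderHom_apply (a : IntervalCat) (x : Fin (a.len + 2)) :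
    (𝟙 a : a ⟶ a).toOrderHom x = x := rfl

lemma hom_ext_val {a b : IntervalCat} {f g : a ⟶ b}
    (h : ∀ x, (f.toOrderHom x : ℕ) = g.toOrderHom x) : f = g :=
  Hom.ext (OrderHom.ext _ _ (funext fun x => Fin.ext (h x)))

lemma hom_ext_of_apply_one {b : IntervalCat} {f g : mk 1 ⟶ b}
    (h : f.toOrderHom 1 = g.toOrderHom 1) : f = g := by
  refine Hom.ext (OrderHom.ext _ _ (funext fun x => ?_))
  fin_cases x
  · exact f.map_bot.trans g.map_bot.symm
  · exact h
  · exact f.map_top.trans g.map_top.symm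

end IntervalCat

open IntervalCat

lemma xiFace_val (t i : ℕ) (x : Fin (t + 2)) :
    ((xiFace t i).toOrderHom x : ℕ)
      = if (x : ℕ) < min (i + 1) (t + 1) then (x : ℕ) else (x : ℕ) + 1 := rfl

lemma xiFace_zero_comp_xiSigma_zero (t : ℕ) :
    xiFace t 0 ≫ xiSigma t 0 = 𝟙 (IntervalCat.mk t) := by
  refine hom_ext_val fun x => ?_
  have := x.isLt
  simp only [comp_toOrderHom_apply, id_toOrderHom_apply, xiFace_val, xiSigma_val]
  split_ifs <;> omega

lemma xiFace_zero_comp_xiSigma_last (t : ℕ) :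
    xiFace (t + 1) 0 ≫ xiSigma (t + 1) (t + 2) = xiSigma t (t + 1) ≫ xiFace t 0 := by
  refine hom_ext_val fun x => ?_
  have := x.isLt
  simp only [comp_toOrderHom_apply, xiFace_val, xiSigma_val]
  split_ifs <;> omega

lemma xiSigma_last_comp_xiSigma_zero (t : ℕ) :
    xiSigma (t + 1) (t + 2) ≫ xiSigma t 0 = xiSigma (t + 1) 0 ≫ xiSigma t (t + 1) := by
  refine hom_ext_val fun x => ?_
  have := x.isLt
  simp only [comp_toOrderHom_apply, xiSigma_val]
  split_ifs <;> omega

lemma xiFace_comp_xiFace_comp_xiSigma_comp_xiSigma (t : ℕ) :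
    (xiFace t 0 ≫ xiFace (t + 1) (t + 1)) ≫ xiSigma (t + 1) (t + 2) ≫ xiSigma t 0
      = 𝟙 (IntervalCat.mk t) := by
  refine hom_ext_val fun x => ?_
  have := x.isLt
  simp only [comp_toOrderHom_apply, id_toOrderHom_apply, xiFace_val, xiSigma_val]
  split_ifs <;> omega

/-- The map `⟨1⟩ ⟶ ⟨q+1⟩` onto `{⊥, 1, ⊤}`; restriction along it is the `q`-fold top face. -/
def botCorner : (q : ℕ) → IntervalCat.mk 1 ⟶ IntervalCat.mk (q + 1)
  | 0 => 𝟙 _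
  | q + 1 => botCorner q ≫ xiFace (q + 1) (q + 1)

/-- The map `⟨1⟩ ⟶ ⟨q+1⟩` onto `{⊥, q+1, ⊤}`; restriction along it is the `q`-fold bottom
face. -/
def topCorner : (q : ℕ) → IntervalCat.mk 1 ⟶ IntervalCat.mk (q + 1)
  | 0 => 𝟙 _
  | q + 1 => topCorner q ≫ xiFace (q + 1) 0

lemma botCorner_apply_one (q : ℕ) : (botCorner q).toOrderHom 1 = 1 := by
  induction q with
  | zero => rfl
  | succ q ih =>
    refine Fin.ext ?_
    rw [botCorner, comp_toOrderHom_apply, ih, xiFace_val]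
    simp

lemma topCorner_apply_one (q : ℕ) :
    (topCorner q).toOrderHom 1 = (Fin.last (q + 1)).castSucc := by
  induction q with
  | zero => rfl
  | succ q ih =>
    refine Fin.ext ?_
    rw [topCorner, comp_toOrderHom_apply, ih, xiFace_val]
    simp

lemma eq_xiSigma_zero_comp {b : IntervalCat} (k : IntervalCat.mk 1 ⟶ b)
    (hk : k.toOrderHom 1 = 0) : k = xiSigma 0 0 ≫ xiFace 0 0 ≫ k :=
  hom_ext_of_apply_one <| by
    rw [comp_toOrderHom_apply, comp_toOrderHom_apply, hk,
      show (xiFace 0 0).toOrderHom ((xiSigma 0 0).toOrderHom 1) = 0 by decide, k.map_bot]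

lemma eq_xiSigma_one_comp {b : IntervalCat} (k : IntervalCat.mk 1 ⟶ b)
    (hk : k.toOrderHom 1 = Fin.last (b.len + 1)) : k = xiSigma 0 1 ≫ xiFace 0 0 ≫ k :=
  hom_ext_of_apply_one <| by
    rw [comp_toOrderHom_apply, comp_toOrderHom_apply, hk,
      show (xiFace 0 0).toOrderHom ((xiSigma 0 1).toOrderHom 1) = Fin.last 2 by decide,
      k.map_top]

lemma botCorner_comp_xiSigma_apply_one (q : ℕ) :
    (botCorner q ≫ xiSigma q 0).toOrderHom 1 = 0 := by
  refine Fin.ext ?_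
  rw [comp_toOrderHom_apply, botCorner_apply_one, xiSigma_val]
  simp

lemma topCorner_comp_xiSigma_apply_one (q : ℕ) :
    (topCorner q ≫ xiSigma q (q + 1)).toOrderHom 1 = Fin.last (q + 1) := by
  refine Fin.ext ?_
  rw [comp_toOrderHom_apply, topCorner_apply_one, xiSigma_val]
  simp

lemma iF_map_uF_map_apply_one {m n : ℕ} (f : IntervalCat.mk m ⟶ IntervalCat.mk n) :
    (iF.map (uF.map f)).toOrderHom 1 = 1 := by
  refine Fin.ext ?_
  change (iObjMap f.toOrderHom 1 : ℕ) = _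
  rw [iObjMap_val]
  simp [show (⟨0, by omega⟩ : Fin (m + 2)) = 0 from rfl, f.map_bot]

lemma iF_map_uF_map_apply_last {m n : ℕ} (f : IntervalCat.mk m ⟶ IntervalCat.mk n) :
    (iF.map (uF.map f)).toOrderHom (Fin.last (m + 2)).castSucc
      = (Fin.last (n + 2)).castSucc := by
  refine Fin.ext ?_
  change (iObjMap f.toOrderHom (Fin.last (m + 2)).castSucc : ℕ) = _
  rw [iObjMap_val]
  simp [show (⟨m + 1, by omega⟩ : Fin (m + 2)) = Fin.last (m + 1) from rfl, f.map_top]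

section Presheaf

variable {A : IntervalCatᵒᵖ ⥤ Type}

lemma Flanked.mem_range_xiSigma_zero (hA : Flanked A) {n : ℕ}
    {w : A.obj (op (IntervalCat.mk (n + 2)))}
    (h : A.map (xiFace (n + 1) (n + 1)).op w ∈ Set.range (A.map (xiSigma n 0).op)) :
    w ∈ Set.range (A.map (xiSigma (n + 1) 0).op) := by
  obtain ⟨v, hv⟩ := h
  obtain ⟨w', -, hw'⟩ := Limits.Types.exists_of_isPullback (hA n).1 v w hv
  exact ⟨w', hw'⟩

lemma Flanked.mem_range_xiSigma_last (hA : Flanked A) {n : ℕ}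
    {w : A.obj (op (IntervalCat.mk (n + 2)))}
    (h : A.map (xiFace (n + 1) 0).op w ∈ Set.range (A.map (xiSigma n (n + 1)).op)) :
    w ∈ Set.range (A.map (xiSigma (n + 1) (n + 2)).op) := by
  obtain ⟨v, hv⟩ := h
  obtain ⟨w', -, hw'⟩ := Limits.Types.exists_of_isPullback (hA n).2 v w hv
  exact ⟨w', hw'⟩

lemma Flanked.mem_range_xiSigma_zero_of_botCorner (hA : Flanked A) {q : ℕ}
    {w : A.obj (op (IntervalCat.mk (q + 1)))}
    (h : A.map (botCorner q).op w ∈ Set.range (A.map (xiSigma 0 0).op)) :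
    w ∈ Set.range (A.map (xiSigma q 0).op) := by
  induction q with
  | zero => simpa [botCorner] using h
  | succ q ih =>
    refine hA.mem_range_xiSigma_zero (ih ?_)
    rwa [botCorner, op_comp, Functor.map_comp_apply] at h

lemma Flanked.mem_range_xiSigma_last_of_topCorner (hA : Flanked A) {q : ℕ}
    {w : A.obj (op (IntervalCat.mk (q + 1)))}
    (h : A.map (topCorner q).op w ∈ Set.range (A.map (xiSigma 0 1).op)) :
    w ∈ Set.range (A.map (xiSigma q (q + 1)).op) := by
  induction q with
  | zero => simpa [topCorner] using h
  | succ q ih =>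
    refine hA.mem_range_xiSigma_last (ih ?_)
    rwa [topCorner, op_comp, Functor.map_comp_apply] at h

lemma map_botCorner_xiSigma_mem_range {q : ℕ} (v : A.obj (op (IntervalCat.mk q))) :
    A.map (botCorner q).op (A.map (xiSigma q 0).op v) ∈ Set.range (A.map (xiSigma 0 0).op) := by
  refine ⟨A.map (xiFace 0 0 ≫ botCorner q ≫ xiSigma q 0).op v, ?_⟩
  rw [← Functor.map_comp_apply, ← Functor.map_comp_apply, ← op_comp, ← op_comp,
    ← eq_xiSigma_zero_comp _ (botCorner_comp_xiSigma_apply_one q)]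

lemma map_topCorner_xiSigma_mem_range {q : ℕ} (v : A.obj (op (IntervalCat.mk q))) :
    A.map (topCorner q).op (A.map (xiSigma q (q + 1)).op v)
      ∈ Set.range (A.map (xiSigma 0 1).op) := by
  refine ⟨A.map (xiFace 0 0 ≫ topCorner q ≫ xiSigma q (q + 1)).op v, ?_⟩
  rw [← Functor.map_comp_apply, ← Functor.map_comp_apply, ← op_comp, ← op_comp,
    ← eq_xiSigma_one_comp _ (topCorner_comp_xiSigma_apply_one q)]

lemma Flanked.mem_range_xiSigma_zero_of_map (hA : Flanked A) {p q : ℕ}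
    (g : IntervalCat.mk (p + 1) ⟶ IntervalCat.mk (q + 1)) (hg : g.toOrderHom 1 = 1)
    {w : A.obj (op (IntervalCat.mk (q + 1)))}
    (h : A.map g.op w ∈ Set.range (A.map (xiSigma p 0).op)) :
    w ∈ Set.range (A.map (xiSigma q 0).op) := by
  obtain ⟨v, hv⟩ := h
  have hcorner : botCorner p ≫ g = botCorner q := hom_ext_of_apply_one <| by
    rw [comp_toOrderHom_apply, botCorner_apply_one, hg, botCorner_apply_one]
  refine hA.mem_range_xiSigma_zero_of_botCorner ?_
  rw [← hcorner, op_comp, Functor.map_comp_apply, ← hv]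
  exact map_botCorner_xiSigma_mem_range v

lemma Flanked.mem_range_xiSigma_last_of_map (hA : Flanked A) {p q : ℕ}
    (g : IntervalCat.mk (p + 1) ⟶ IntervalCat.mk (q + 1))
    (hg : g.toOrderHom (Fin.last (p + 1)).castSucc = (Fin.last (q + 1)).castSucc)
    {w : A.obj (op (IntervalCat.mk (q + 1)))}
    (h : A.map g.op w ∈ Set.range (A.map (xiSigma p (p + 1)).op)) :
    w ∈ Set.range (A.map (xiSigma q (q + 1)).op) := by
  obtain ⟨v, hv⟩ := h
  have hcorner : topCorner p ≫ g = topCorner q := hom_ext_of_apply_one <| by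
    rw [comp_toOrderHom_apply, topCorner_apply_one, hg, topCorner_apply_one]
  refine hA.mem_range_xiSigma_last_of_topCorner ?_
  rw [← hcorner, op_comp, Functor.map_comp_apply, ← hv]
  exact map_topCorner_xiSigma_mem_range v

variable (A)

lemma unitNT_app_apply (t : ℕ) (x : A.obj (op (IntervalCat.mk t))) :
    (unitNT A).app (op (IntervalCat.mk t)) x
      = A.map (xiSigma (t + 1) (t + 2)).op (A.map (xiSigma t 0).op x) := rfl

lemma unitNT_app_injective (t : ℕ) :
    Function.Injective ((unitNT A).app (op (IntervalCat.mk t))) := by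
  refine Function.LeftInverse.injective (g := A.map (xiFace t 0 ≫ xiFace (t + 1) (t + 1)).op)
    fun x => ?_
  rw [unitNT_app_apply, ← Functor.map_comp_apply, ← Functor.map_comp_apply,
    ← op_comp, ← op_comp, Category.assoc, xiFace_comp_xiFace_comp_xiSigma_comp_xiSigma, op_id,
    Functor.map_id_apply]

lemma range_unitNT_app (t : ℕ) :
    Set.range ((unitNT A).app (op (IntervalCat.mk t)))
      = Set.range (A.map (xiSigma (t + 1) 0).op)
        ∩ Set.range (A.map (xiSigma (t + 1) (t + 2)).op) := by
  ext w
  constructor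
  · rintro ⟨x, rfl⟩
    refine ⟨⟨A.map (xiSigma t (t + 1)).op x, ?_⟩, ⟨_, rfl⟩⟩
    rw [unitNT_app_apply, ← Functor.map_comp_apply, ← Functor.map_comp_apply,
      ← op_comp, ← op_comp, xiSigma_last_comp_xiSigma_zero]
  · rintro ⟨⟨v₁, rfl⟩, ⟨v₂, hv₂⟩⟩
    have hv₁ : v₁ = A.map (xiSigma t (t + 1)).op (A.map (xiFace t 0).op v₂) := by
      calc v₁ = A.map (xiFace (t + 1) 0).op (A.map (xiSigma (t + 1) 0).op v₁) := by
            rw [← Functor.map_comp_apply, ← op_comp, xiFace_zero_comp_xiSigma_zero, op_id,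
              Functor.map_id_apply]
        _ = A.map (xiFace (t + 1) 0).op (A.map (xiSigma (t + 1) (t + 2)).op v₂) := by rw [hv₂]
        _ = A.map (xiSigma t (t + 1)).op (A.map (xiFace t 0).op v₂) := by
            rw [← Functor.map_comp_apply, ← Functor.map_comp_apply, ← op_comp, ← op_comp,
              xiFace_zero_comp_xiSigma_last]
    refine ⟨A.map (xiFace t 0).op v₂, ?_⟩
    rw [unitNT_app_apply, ← Functor.map_comp_apply, ← op_comp,
      xiSigma_last_comp_xiSigma_zero, op_comp, Functor.map_comp_apply, ← hv₁]

variable {A}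

lemma Flanked.mem_range_unitNT_app_of_map (hA : Flanked A) {m n : ℕ}
    (f : IntervalCat.mk m ⟶ IntervalCat.mk n) {w : A.obj (op (IntervalCat.mk (n + 2)))}
    (h : A.map (iF.map (uF.map f)).op w ∈ Set.range ((unitNT A).app (op (IntervalCat.mk m)))) :
    w ∈ Set.range ((unitNT A).app (op (IntervalCat.mk n))) := by
  rw [range_unitNT_app] at h ⊢
  exact ⟨hA.mem_range_xiSigma_zero_of_map (p := m + 1) _ (iF_map_uF_map_apply_one f) h.1,
    hA.mem_range_xiSigma_last_of_map (p := m + 1) _ (iF_map_uF_map_apply_last f) h.2⟩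

end Presheaf

/-- for `A` a flanked presheaf on `Ξ`, the unit `η_A : A ⟶ u*i*A` is a
cartesian map of presheaves on `Ξ`. -/
theorem unit_cartesian (A : IntervalCatᵒᵖ ⥤ Type) (hA : Flanked A) :
    IsCartesianXi (unitNT A) := by
  rintro ⟨⟨n⟩⟩ ⟨⟨m⟩⟩ φ
  exact Limits.Types.isPullback_of_injective ((unitNT A).naturality φ).symm
    (unitNT_app_injective A n) (unitNT_app_injective A m)
    fun _ hw => hA.mem_range_unitNT_app_of_map φ.unop hw

end DS3
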